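/- arXiv:2009.08707 — 4 statements merged into one kernel-verified Lean document; each statement's English description precedes it below -/
import Mathlib

section
/- A 2-connected non-geodetic signed graph Σ is incompatible if and only if Σ contains a negative even cycle C_{2k} possessing two diametrically opposite vertices u and v on C_{2k} such that d_Σ(u,v) = k (i.e., there is no u–v path in Σ of length less than k). -/
open SimpleGraph

/-- The sign of a walk: the product of the signs of its edges. -/
def walkSign {V : Type*} {G : SimpleGraph V} (σ : V → V → ℤ) :
    {u v : V} → G.Walk u v → ℤ
  | _, _, SimpleGraph.Walk.nil => 1
  | _, _, @SimpleGraph.Walk.cons _ _ a b _ _ p => σ a b * walkSign σ p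

/-- A walk is a shortest path if its length equals the distance of its endpoints. -/
def IsShortest {V : Type*} {G : SimpleGraph V} {u v : V} (p : G.Walk u v) : Prop :=
  p.length = G.dist u v

/-- Two vertices are compatible if all shortest paths between them have the same sign. -/
def PairCompatible {V : Type*} (G : SimpleGraph V) (σ : V → V → ℤ) (u v : V) : Prop :=
  ∀ p q : G.Walk u v, IsShortest p → IsShortest q → walkSign σ p = walkSign σ q

/-- A graph is 2-connected: connected, and still connected after deleting any vertex. -/
def TwoConnected {V : Type*} (G : SimpleGraph V) : Prop :=
  G.Connected ∧ ∀ v : V, (G.induce {u : V | u ≠ v}).Connected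

/-- A graph is geodetic if between any two vertices there is a unique shortest path. -/
def Geodetic {V : Type*} (G : SimpleGraph V) : Prop :=
  ∀ (u v : V) (p q : G.Walk u v), IsShortest p → IsShortest q → p = q

/-!
Take an incompatible pair `u, v` at minimal distance and two shortest `u`–`v` paths of opposite
sign. If they shared an inner vertex `w`, cutting both at `w` would give shortest paths for the
closer pairs `u, w` and `w, v`, which are compatible by minimality, so the two paths would have
equal sign. Hence they are internally disjoint, and as shortest paths of length at most one are
unique, they close up into a negative cycle on which `u` and `v` are opposite. Conversely, the
two halves of such a cycle are shortest `u`–`v` paths whose signs differ.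
-/

section

variable {V : Type*} {G : SimpleGraph V} {σ : V → V → ℤ} {u v w : V}

lemma walkSign_append (p : G.Walk u v) (q : G.Walk v w) :
    walkSign σ (p.append q) = walkSign σ p * walkSign σ q := by
  induction p with
  | nil => simp [walkSign]
  | cons h p ih => simp [walkSign, ih, mul_assoc]

lemma walkSign_reverse (hsymm : ∀ u v : V, σ u v = σ v u) (p : G.Walk u v) :
    walkSign σ p.reverse = walkSign σ p := by
  induction p with
  | nil => rfl
  | cons h p ih => simp [walkSign, walkSign_append, ih, hsymm _ _, mul_comm]

lemma walkSign_eq_one_or_eq_neg_one (hσ : ∀ u v : V, G.Adj u v → σ u v = 1 ∨ σ u v = -1)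
    (p : G.Walk u v) : walkSign σ p = 1 ∨ walkSign σ p = -1 := by
  induction p with
  | nil => left; rfl
  | cons h p ih =>
    rcases hσ _ _ h with h | h <;> rcases ih with ih | ih <;> simp [walkSign, h, ih]

lemma walkSign_append_reverse_eq_neg_one_iff
    (hσ : ∀ u v : V, G.Adj u v → σ u v = 1 ∨ σ u v = -1) (hsymm : ∀ u v : V, σ u v = σ v u)
    (p q : G.Walk u v) :
    walkSign σ (p.append q.reverse) = -1 ↔ walkSign σ p ≠ walkSign σ q := by
  rw [walkSign_append, walkSign_reverse hsymm]
  rcases walkSign_eq_one_or_eq_neg_one hσ p with hp | hp <;>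
    rcases walkSign_eq_one_or_eq_neg_one hσ q with hq | hq <;> simp [hp, hq]

lemma IsShortest.takeUntil_and_dropUntil [DecidableEq V] {p : G.Walk u v} (hp : IsShortest p)
    (hw : w ∈ p.support) : IsShortest (p.takeUntil w hw) ∧ IsShortest (p.dropUntil w hw) := by
  have hsplit := congrArg Walk.length (p.take_spec hw)
  rw [Walk.length_append] at hsplit
  have htake := dist_le (p.takeUntil w hw)
  have hdrop := dist_le (p.dropUntil w hw)
  have htriangle := (p.takeUntil w hw).reachable.dist_triangle_left v
  unfold IsShortest at *
  omega

lemma walkSign_eq_of_mem_support_of_pairCompatible [DecidableEq V] {p q : G.Walk u v}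
    (hp : IsShortest p) (hq : IsShortest q) (hwp : w ∈ p.support) (hwq : w ∈ q.support)
    (huw : PairCompatible G σ u w) (hwv : PairCompatible G σ w v) :
    walkSign σ p = walkSign σ q := by
  obtain ⟨hp₁, hp₂⟩ := hp.takeUntil_and_dropUntil hwp
  obtain ⟨hq₁, hq₂⟩ := hq.takeUntil_and_dropUntil hwq
  rw [← p.take_spec hwp, ← q.take_spec hwq, walkSign_append, walkSign_append,
    huw _ _ hp₁ hq₁, hwv _ _ hp₂ hq₂]

lemma exists_internally_disjoint_of_not_pairCompatible (h : ¬ PairCompatible G σ u v) :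
    ∃ (a b : V) (p q : G.Walk a b), IsShortest p ∧ IsShortest q ∧
      walkSign σ p ≠ walkSign σ q ∧ ∀ w ∈ p.support, w ∈ q.support → w = a ∨ w = b := by
  classical
  induction hn : G.dist u v using Nat.strong_induction_on generalizing u v with
  | _ n ih =>
  simp only [PairCompatible, not_forall] at h
  obtain ⟨p, q, hp, hq, hne⟩ := h
  by_cases hcommon : ∃ w ∈ p.support, w ∈ q.support ∧ w ≠ u ∧ w ≠ v
  · obtain ⟨w, hwp, hwq, hwu, hwv⟩ := hcommon
    obtain ⟨htake, hdrop⟩ := hp.takeUntil_and_dropUntil hwp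
    have hlt_take := p.length_takeUntil_lt_length hwp hwv
    have hlt_drop := p.length_dropUntil_lt_length hwp hwu
    unfold IsShortest at hp htake hdrop
    by_cases huw : PairCompatible G σ u w
    · exact ih _ (by omega) (fun hwv' =>
        hne (walkSign_eq_of_mem_support_of_pairCompatible hp hq hwp hwq huw hwv')) rfl
    · exact ih _ (by omega) huw rfl
  · push Not at hcommon
    exact ⟨u, v, p, q, hp, hq, hne, fun w hwp hwq => by tauto⟩

lemma SimpleGraph.Walk.IsPath.start_notMem_support_tail {p : G.Walk u v} (hp : p.IsPath) :
    u ∉ p.support.tail := by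
  have hnodup := hp.support_nodup
  rw [← p.cons_tail_support] at hnodup
  exact (List.nodup_cons.mp hnodup).1

lemma SimpleGraph.Walk.IsPath.isCycle_append_reverse {p q : G.Walk u v} (hp : p.IsPath)
    (hq : q.IsPath) (hlen : 1 < p.length)
    (hdisj : ∀ w ∈ p.support, w ∈ q.support → w = u ∨ w = v) :
    (p.append q.reverse).IsCycle := by
  refine hp.isCycle_append hq.reverse (fun w hwp hwq => ?_) (Or.inl hlen)
  have hwq' : w ∈ q.support := by
    simpa [Walk.support_reverse] using List.mem_of_mem_tail hwq
  rcases hdisj w (List.mem_of_mem_tail hwp) hwq' with rfl | rfl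
  · exact hp.start_notMem_support_tail hwp
  · exact hq.reverse.start_notMem_support_tail hwq

end

theorem incompatible_iff_negative_even_cycle_general {V : Type*} (G : SimpleGraph V)
    (σ : V → V → ℤ)
    (hσ : ∀ u v : V, G.Adj u v → σ u v = 1 ∨ σ u v = -1)
    (hsymm : ∀ u v : V, σ u v = σ v u) :
    (∃ u v : V, ¬ PairCompatible G σ u v) ↔
      ∃ (k : ℕ) (u v : V) (p q : G.Walk u v), 0 < k ∧
        p.length = k ∧ q.length = k ∧
        (p.append q.reverse).IsCycle ∧
        walkSign σ (p.append q.reverse) = -1 ∧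
        G.dist u v = k := by
  constructor
  · rintro ⟨_, _, h⟩
    obtain ⟨u, v, p, q, hp, hq, hne, hdisj⟩ :=
      exists_internally_disjoint_of_not_pairCompatible h
    unfold IsShortest at hp hq
    have hlen : 1 < p.length := by
      by_contra! hle
      exact hne (congrArg _ (Walk.eq_of_length_le_one hle (by omega)))
    refine ⟨p.length, u, v, p, q, by omega, rfl, by omega, ?_, ?_, hp.symm⟩
    · exact (p.isPath_of_length_eq_dist hp).isCycle_append_reverse
        (q.isPath_of_length_eq_dist hq) hlen hdisj
    · exact (walkSign_append_reverse_eq_neg_one_iff hσ hsymm p q).2 hne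
  · rintro ⟨k, u, v, p, q, -, hp, hq, -, hneg, hdist⟩
    exact ⟨u, v, fun h => (walkSign_append_reverse_eq_neg_one_iff hσ hsymm p q).1 hneg
      (h p q (hp.trans hdist.symm) (hq.trans hdist.symm))⟩

/-- A 2-connected non-geodetic signed graph is incompatible if and only if it has a
negative even cycle `C_{2k}` with two diametrically opposite vertices `u` and `v`
(so `C_{2k}` is the union of two `u`–`v` paths of length `k`) such that there is no
shortest path between `u` and `v` of length less than `k`, i.e. `d(u,v) = k`. -/
theorem incompatible_iff_negative_even_cycle {V : Type*} (G : SimpleGraph V)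
    (σ : V → V → ℤ)
    (hσ : ∀ u v : V, G.Adj u v → σ u v = 1 ∨ σ u v = -1)
    (hsymm : ∀ u v : V, σ u v = σ v u)
    (h2c : TwoConnected G) (hng : ¬ Geodetic G) :
    (∃ u v : V, ¬ PairCompatible G σ u v) ↔
      ∃ (k : ℕ) (u v : V) (p q : G.Walk u v), 0 < k ∧
        p.length = k ∧ q.length = k ∧
        (p.append q.reverse).IsCycle ∧
        walkSign σ (p.append q.reverse) = -1 ∧
        G.dist u v = k :=
  incompatible_iff_negative_even_cycle_general G σ hσ hsymm
end

section
/- Every shortest path P between u = (u₁,u₂) and v = (v₁,v₂) in the Cartesian product of two compatible signed graphs has sign equal to the product of the (unique) sign of shortest u₁–v₁ paths in Σ₁ and the (unique) sign of shortest u₂–v₂ paths in Σ₂. -/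
open SimpleGraph

/-- A signed graph is compatible if all shortest paths between any two vertices have
the same sign. -/
def Compatible {V : Type*} (G : SimpleGraph V) (σ : V → V → ℤ) : Prop :=
  ∀ (u v : V) (p q : G.Walk u v), IsShortest p → IsShortest q →
    walkSign σ p = walkSign σ q

/-- The signature of the Cartesian product of signed graphs: an edge inherits the sign
from the coordinate in which the move occurs. -/
def boxSign {V₁ V₂ : Type*} (σ₁ : V₁ → V₁ → ℤ) (σ₂ : V₂ → V₂ → ℤ)
    [DecidableEq V₁] [DecidableEq V₂] : V₁ × V₂ → V₁ × V₂ → ℤ :=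
  fun x y => if x.2 = y.2 then σ₁ x.1 y.1 else σ₂ x.2 y.2

/-!
A walk in `G₁ □ G₂` projects onto walks in the two factors whose lengths add up to its length
and whose signs multiply to its sign. Distances in the product also add up, so both projections
of a shortest walk are shortest walks, and its sign is therefore `s * t`.
-/

section

variable {α β : Type*} {G : SimpleGraph α} {H : SimpleGraph β}

lemma SimpleGraph.Reachable.dist_boxProd {x y : α × β} (h : (G □ H).Reachable x y) :
    (G □ H).dist x y = G.dist x.1 y.1 + H.dist x.2 y.2 := by
  obtain ⟨h₁, h₂⟩ := reachable_boxProd.mp h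
  have hedist := edist_boxProd (G := G) (H := H) x y
  rw [← h.coe_dist_eq_edist, ← h₁.coe_dist_eq_edist, ← h₂.coe_dist_eq_edist] at hedist
  exact_mod_cast hedist

variable [DecidableEq α] [DecidableEq β] [DecidableRel G.Adj] [DecidableRel H.Adj]

lemma IsShortest.ofBoxProd {x y : α × β} {P : (G □ H).Walk x y} (hP : IsShortest P) :
    IsShortest P.ofBoxProdLeft ∧ IsShortest P.ofBoxProdRight := by
  obtain ⟨x₁, x₂⟩ := x
  obtain ⟨y₁, y₂⟩ := y
  have hlen := P.length_boxProd
  have hdist := Reachable.dist_boxProd ⟨P⟩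
  have := dist_le P.ofBoxProdLeft
  have := dist_le P.ofBoxProdRight
  unfold IsShortest at *
  constructor <;> omega

lemma walkSign_boxProd (σ₁ : α → α → ℤ) (σ₂ : β → β → ℤ) {x y : α × β}
    (P : (G □ H).Walk x y) :
    walkSign (boxSign σ₁ σ₂) P = walkSign σ₁ P.ofBoxProdLeft * walkSign σ₂ P.ofBoxProdRight := by
  induction P with
  | nil => rfl
  | @cons x z y h P ih =>
    obtain ⟨x₁, x₂⟩ := x
    obtain ⟨z₁, z₂⟩ := z
    rcases id h with ⟨hG, he⟩ | ⟨hH, he⟩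
    · dsimp only at hG he
      subst he
      simp only [walkSign, boxSign, ↓reduceIte, ih, Walk.ofBoxProdLeft, Or.by_cases, hG,
        and_self, ↓reduceDIte, Walk.ofBoxProdRight, SimpleGraph.irrefl, false_and]
      ring
    · dsimp only at hH he
      subst he
      simp only [walkSign, boxSign, hH.ne, ↓reduceIte, ih, Walk.ofBoxProdLeft, Or.by_cases,
        SimpleGraph.irrefl, and_self, ↓reduceDIte, Walk.ofBoxProdRight, hH]
      ring

end

theorem boxProd_shortest_walk_sign_general {V₁ V₂ : Type*} [DecidableEq V₁] [DecidableEq V₂]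
    (G₁ : SimpleGraph V₁) (G₂ : SimpleGraph V₂)
    (σ₁ : V₁ → V₁ → ℤ) (σ₂ : V₂ → V₂ → ℤ)
    (u₁ v₁ : V₁) (u₂ v₂ : V₂) (s t : ℤ)
    (hs : ∀ p : G₁.Walk u₁ v₁, IsShortest p → walkSign σ₁ p = s)
    (ht : ∀ q : G₂.Walk u₂ v₂, IsShortest q → walkSign σ₂ q = t) :
    ∀ P : (G₁ □ G₂).Walk (u₁, u₂) (v₁, v₂), IsShortest P →
      walkSign (boxSign σ₁ σ₂) P = s * t := by
  classical
  intro P hP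
  obtain ⟨hP₁, hP₂⟩ := hP.ofBoxProd
  rw [walkSign_boxProd, hs _ hP₁, ht _ hP₂]

/-- Every shortest path between `(u₁,u₂)` and `(v₁,v₂)` in the Cartesian product of
two compatible signed graphs has sign equal to the product of the unique sign of
shortest `u₁`–`v₁` paths in `Σ₁` and the unique sign of shortest `u₂`–`v₂` paths
in `Σ₂`. -/
theorem boxProd_shortest_walk_sign {V₁ V₂ : Type*} [DecidableEq V₁] [DecidableEq V₂]
    (G₁ : SimpleGraph V₁) (G₂ : SimpleGraph V₂)
    (h₁ : G₁.Connected) (h₂ : G₂.Connected)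
    (σ₁ : V₁ → V₁ → ℤ) (σ₂ : V₂ → V₂ → ℤ)
    (hσ₁ : ∀ u v : V₁, G₁.Adj u v → σ₁ u v = 1 ∨ σ₁ u v = -1)
    (hσ₂ : ∀ u v : V₂, G₂.Adj u v → σ₂ u v = 1 ∨ σ₂ u v = -1)
    (hsymm₁ : ∀ u v : V₁, σ₁ u v = σ₁ v u) (hsymm₂ : ∀ u v : V₂, σ₂ u v = σ₂ v u)
    (hc₁ : Compatible G₁ σ₁) (hc₂ : Compatible G₂ σ₂)
    (u₁ v₁ : V₁) (u₂ v₂ : V₂) (s t : ℤ)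
    (hs : ∀ p : G₁.Walk u₁ v₁, IsShortest p → walkSign σ₁ p = s)
    (ht : ∀ q : G₂.Walk u₂ v₂, IsShortest q → walkSign σ₂ q = t) :
    ∀ P : (G₁ □ G₂).Walk (u₁, u₂) (v₁, v₂), IsShortest P →
      walkSign (boxSign σ₁ σ₂) P = s * t :=
  boxProd_shortest_walk_sign_general G₁ G₂ σ₁ σ₂ u₁ v₁ u₂ v₂ s t hs ht
end

section
/- If Σ₂ contains a positive edge and a negative edge sharing a vertex, and Σ₁ contains at least one edge, then the lexicographic product Σ₁[Σ₂] is incompatible: specifically, for vertices v₁,v₂,v₃ in Σ₂ with σ₂(v₁v₂) = +1 and σ₂(v₂v₃) = −1 and v₁ ≁ v₃, and an edge u₁u₂ in Σ₁, the vertices (u₁,v₁) and (u₁,v₃) admit two shortest paths of length 2 with opposite signs. -/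
/-!
Both paths from `(u₁, v₁)` to `(u₁, v₃)` have length two and their endpoints are distinct and
non-adjacent, so both are shortest. The path inside the fibre over `u₁` has sign
`σ₂(v₁v₂) σ₂(v₂v₃) = -1`, while the detour through `(u₂, v₁)` crosses the edge `u₁u₂` twice and
so has sign `σ₁(u₁u₂)² = 1`.
-/

open SimpleGraph

/-- The lexicographic product of two graphs: `(a,b) ~ (c,d)` iff `a ~ c`,
or `a = c` and `b ~ d`. -/
def lexProd {V₁ V₂ : Type*} (G₁ : SimpleGraph V₁) (G₂ : SimpleGraph V₂) :
    SimpleGraph (V₁ × V₂) where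
  Adj x y := G₁.Adj x.1 y.1 ∨ (x.1 = y.1 ∧ G₂.Adj x.2 y.2)
  symm := by
    refine ⟨?_⟩
    rintro x y (h | ⟨h, h2⟩)
    · exact Or.inl h.symm
    · exact Or.inr ⟨h.symm, h2.symm⟩
  loopless := by
    refine ⟨?_⟩
    rintro x (h | ⟨_, h2⟩)
    · exact G₁.loopless.irrefl _ h
    · exact G₂.loopless.irrefl _ h2

/-- The signature of the lexicographic product of signed graphs. -/
def lexSign {V₁ V₂ : Type*} [DecidableEq V₁] (σ₁ : V₁ → V₁ → ℤ) (σ₂ : V₂ → V₂ → ℤ) :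
    V₁ × V₂ → V₁ × V₂ → ℤ :=
  fun x y => if x.1 = y.1 then σ₂ x.2 y.2 else σ₁ x.1 y.1

section WalkSign

variable {V : Type*} {G : SimpleGraph V} (σ : V → V → ℤ)

@[simp]
lemma walkSign_nil {u : V} : walkSign σ (Walk.nil : G.Walk u u) = 1 := rfl

@[simp]
lemma walkSign_cons {u v w : V} (h : G.Adj u v) (p : G.Walk v w) :
    walkSign σ (Walk.cons h p) = σ u v * walkSign σ p := rfl

lemma not_compatible_of_walkSign_ne {u v : V} {p q : G.Walk u v}
    (hp : IsShortest p) (hq : IsShortest q) (hpq : walkSign σ p ≠ walkSign σ q) :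
    ¬ Compatible G σ :=
  fun hc ↦ hpq (hc u v p q hp hq)

end WalkSign

lemma isShortest_of_length_eq_two {V : Type*} {G : SimpleGraph V} {u w : V} {p : G.Walk u w}
    (hp : p.length = 2) (hne : u ≠ w) (hnadj : ¬ G.Adj u w) : IsShortest p := by
  have hle : G.dist u w ≤ 2 := hp ▸ dist_le p
  have hpos : G.dist u w ≠ 0 := (p.reachable.dist_eq_zero_iff).not.mpr hne
  have hone : G.dist u w ≠ 1 := dist_eq_one_iff_adj.not.mpr hnadj
  unfold IsShortest
  omega

section LexProd

variable {V₁ V₂ : Type*} {G₁ : SimpleGraph V₁} {G₂ : SimpleGraph V₂}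

lemma lexProd_adj_of_fst_adj {a c : V₁} (b d : V₂) (h : G₁.Adj a c) :
    (lexProd G₁ G₂).Adj (a, b) (c, d) :=
  Or.inl h

lemma lexProd_adj_of_snd_adj (a : V₁) {b d : V₂} (h : G₂.Adj b d) :
    (lexProd G₁ G₂).Adj (a, b) (a, d) :=
  Or.inr ⟨rfl, h⟩

lemma lexProd_adj_fiber_iff {a : V₁} {b d : V₂} :
    (lexProd G₁ G₂).Adj (a, b) (a, d) ↔ G₂.Adj b d := by
  simp [lexProd]

variable [DecidableEq V₁] (σ₁ : V₁ → V₁ → ℤ) (σ₂ : V₂ → V₂ → ℤ)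

@[simp]
lemma lexSign_fiber (a : V₁) (b d : V₂) : lexSign σ₁ σ₂ (a, b) (a, d) = σ₂ b d :=
  if_pos rfl

lemma lexSign_of_ne {a c : V₁} (h : a ≠ c) (b d : V₂) :
    lexSign σ₁ σ₂ (a, b) (c, d) = σ₁ a c :=
  if_neg h

end LexProd

theorem lexProd_incompatible_general {V₁ V₂ : Type*} [DecidableEq V₁]
    (G₁ : SimpleGraph V₁) (G₂ : SimpleGraph V₂)
    (σ₁ : V₁ → V₁ → ℤ) (σ₂ : V₂ → V₂ → ℤ)
    (hσ₁ : ∀ u v : V₁, G₁.Adj u v → σ₁ u v = 1 ∨ σ₁ u v = -1)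
    (hsymm₁ : ∀ u v : V₁, σ₁ u v = σ₁ v u) (hsymm₂ : ∀ u v : V₂, σ₂ u v = σ₂ v u)
    (u₁ u₂ : V₁) (hu : G₁.Adj u₁ u₂)
    (v₁ v₂ v₃ : V₂) (h12 : G₂.Adj v₁ v₂) (h23 : G₂.Adj v₂ v₃) (h13 : ¬ G₂.Adj v₁ v₃)
    (hpos : σ₂ v₁ v₂ = 1) (hneg : σ₂ v₂ v₃ = -1) :
    ∃ P₁ P₂ : (lexProd G₁ G₂).Walk (u₁, v₁) (u₁, v₃),
      IsShortest P₁ ∧ IsShortest P₂ ∧ P₁.length = 2 ∧ P₂.length = 2 ∧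
      walkSign (lexSign σ₁ σ₂) P₁ = - walkSign (lexSign σ₁ σ₂) P₂ ∧
      ¬ Compatible (lexProd G₁ G₂) (lexSign σ₁ σ₂) := by
  have hv₁₃ : v₁ ≠ v₃ := by
    rintro rfl
    linarith [hsymm₂ v₁ v₂]
  have hne : ((u₁, v₁) : V₁ × V₂) ≠ (u₁, v₃) := by simpa using hv₁₃
  have hnadj : ¬ (lexProd G₁ G₂).Adj (u₁, v₁) (u₁, v₃) := lexProd_adj_fiber_iff.not.mpr h13
  let P₁ : (lexProd G₁ G₂).Walk (u₁, v₁) (u₁, v₃) :=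
    .cons (lexProd_adj_of_snd_adj u₁ h12) (.cons (lexProd_adj_of_snd_adj u₁ h23) .nil)
  let P₂ : (lexProd G₁ G₂).Walk (u₁, v₁) (u₁, v₃) :=
    .cons (lexProd_adj_of_fst_adj v₁ v₁ hu) (.cons (lexProd_adj_of_fst_adj v₁ v₃ hu.symm) .nil)
  have hP₁ : IsShortest P₁ := isShortest_of_length_eq_two rfl hne hnadj
  have hP₂ : IsShortest P₂ := isShortest_of_length_eq_two rfl hne hnadj
  have hs₁ : walkSign (lexSign σ₁ σ₂) P₁ = -1 := by simp [P₁, hpos, hneg]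
  have hs₂ : walkSign (lexSign σ₁ σ₂) P₂ = 1 := by
    simp only [P₂, walkSign_cons, walkSign_nil, lexSign_of_ne _ _ hu.ne,
      lexSign_of_ne _ _ hu.ne.symm, ← hsymm₁ u₁ u₂, mul_one]
    exact mul_self_eq_one_iff.mpr (hσ₁ u₁ u₂ hu)
  refine ⟨P₁, P₂, hP₁, hP₂, rfl, rfl, by rw [hs₁, hs₂], ?_⟩
  exact not_compatible_of_walkSign_ne _ hP₁ hP₂ (by rw [hs₁, hs₂]; decide)

/-- If `Σ₂` contains a positive edge `v₁v₂` and a negative edge `v₂v₃` with `v₁ ≁ v₃`,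
and `Σ₁` has an edge `u₁u₂`, then `(u₁,v₁)` and `(u₁,v₃)` admit two shortest paths of
length `2` of opposite signs in `Σ₁[Σ₂]`; in particular the product is incompatible. -/
theorem lexProd_incompatible {V₁ V₂ : Type*} [DecidableEq V₁]
    (G₁ : SimpleGraph V₁) (G₂ : SimpleGraph V₂)
    (σ₁ : V₁ → V₁ → ℤ) (σ₂ : V₂ → V₂ → ℤ)
    (hσ₁ : ∀ u v : V₁, G₁.Adj u v → σ₁ u v = 1 ∨ σ₁ u v = -1)
    (hσ₂ : ∀ u v : V₂, G₂.Adj u v → σ₂ u v = 1 ∨ σ₂ u v = -1)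
    (hsymm₁ : ∀ u v : V₁, σ₁ u v = σ₁ v u) (hsymm₂ : ∀ u v : V₂, σ₂ u v = σ₂ v u)
    (u₁ u₂ : V₁) (hu : G₁.Adj u₁ u₂)
    (v₁ v₂ v₃ : V₂) (h12 : G₂.Adj v₁ v₂) (h23 : G₂.Adj v₂ v₃) (h13 : ¬ G₂.Adj v₁ v₃)
    (hpos : σ₂ v₁ v₂ = 1) (hneg : σ₂ v₂ v₃ = -1) :
    ∃ P₁ P₂ : (lexProd G₁ G₂).Walk (u₁, v₁) (u₁, v₃),
      IsShortest P₁ ∧ IsShortest P₂ ∧ P₁.length = 2 ∧ P₂.length = 2 ∧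
      walkSign (lexSign σ₁ σ₂) P₁ = - walkSign (lexSign σ₁ σ₂) P₂ ∧
      ¬ Compatible (lexProd G₁ G₂) (lexSign σ₁ σ₂) :=
  lexProd_incompatible_general G₁ G₂ σ₁ σ₂ hσ₁ hsymm₁ hsymm₂ u₁ u₂ hu v₁ v₂ v₃ h12 h23 h13 hpos hneg
end

section
/- If u and v are an incompatible pair of vertices in a signed graph Σ₁ at distance k, and vv' is any edge in a signed graph Σ₂ such that the tensor product Σ₁ ⊗ Σ₂ is connected, then (u, v) paired appropriately yields an incompatible pair in Σ₁ ⊗ Σ₂ at distance k: when k is even, ((u₀,w),(u_k,w)) is incompatible; when k is odd, ((u₀,w),(u_k,w')) is incompatible, where ww' is an edge of Σ₂ and u₀, u_k denote u and v. -/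
open SimpleGraph

/-- The tensor (categorical) product of two graphs. -/
def tensorProd {V₁ V₂ : Type*} (G₁ : SimpleGraph V₁) (G₂ : SimpleGraph V₂) :
    SimpleGraph (V₁ × V₂) where
  Adj x y := G₁.Adj x.1 y.1 ∧ G₂.Adj x.2 y.2
  symm := ⟨fun x y h => ⟨h.1.symm, h.2.symm⟩⟩
  loopless := ⟨fun x h => G₁.loopless.irrefl _ h.1⟩

/-- The signature of the tensor product of signed graphs: the product of the signs of
the projected edges. -/
def tensorSign {V₁ V₂ : Type*} (σ₁ : V₁ → V₁ → ℤ) (σ₂ : V₂ → V₂ → ℤ) :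
    V₁ × V₂ → V₁ × V₂ → ℤ :=
  fun x y => σ₁ x.1 y.1 * σ₂ x.2 y.2

/-!
Zipping a walk of `Σ₁` with a walk of `Σ₂` of the same length gives a walk of `Σ₁ ⊗ Σ₂` whose
sign is the product of the two signs, and projecting to the first factor shows that zipping a
shortest path of `Σ₁` gives a shortest path. An edge `ww'` yields closed walks at `w` of every
even length and `w`–`w'` walks of every odd length; zipping two shortest `u₀`–`u_k` paths of
opposite signs with the same such walk gives two shortest paths of opposite signs.
-/

namespace SimpleGraph

variable {V : Type*} {G : SimpleGraph V}

theorem Reachable.dist_map_le {V' : Type*} {G' : SimpleGraph V'} (f : G →g G') {u v : V}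
    (h : G.Reachable u v) : G'.dist (f u) (f v) ≤ G.dist u v := by
  obtain ⟨p, hp⟩ := h.exists_walk_length_eq_dist
  calc G'.dist (f u) (f v) ≤ (p.map f).length := dist_le _
    _ = G.dist u v := by rw [Walk.length_map, hp]

theorem Adj.exists_walk_length_eq_two_mul {w w' : V} (h : G.Adj w w') (n : ℕ) :
    ∃ r : G.Walk w w, r.length = 2 * n := by
  induction n with
  | zero => exact ⟨.nil, rfl⟩
  | succ n ih =>
    obtain ⟨r, hr⟩ := ih
    exact ⟨.cons h (.cons h.symm r), by simp only [Walk.length_cons, hr]; ring⟩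

end SimpleGraph

theorem walkSign_ne_zero {V : Type*} {G : SimpleGraph V} {σ : V → V → ℤ}
    (hσ : ∀ u v, G.Adj u v → σ u v ≠ 0) {u v : V} (p : G.Walk u v) : walkSign σ p ≠ 0 := by
  induction p with
  | nil => exact one_ne_zero
  | cons h _ ih => exact mul_ne_zero (hσ _ _ h) ih

section TensorWalk

variable {V₁ V₂ : Type*} {G₁ : SimpleGraph V₁} {G₂ : SimpleGraph V₂}

def tensorProdFst : tensorProd G₁ G₂ →g G₁ := ⟨Prod.fst, And.left⟩

def tensorWalk : ∀ {u v : V₁} {x y : V₂} (p : G₁.Walk u v) (r : G₂.Walk x y),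
    p.length = r.length → (tensorProd G₁ G₂).Walk (u, x) (v, y)
  | _, _, _, _, .nil, .nil, _ => .nil
  | _, _, _, _, .cons h p, .cons h' r, hl => .cons ⟨h, h'⟩ (tensorWalk p r (by simpa using hl))
  | _, _, _, _, .nil, .cons _ _, hl => by simp at hl
  | _, _, _, _, .cons _ _, .nil, hl => by simp at hl

theorem tensorWalk_length : ∀ {u v : V₁} {x y : V₂} (p : G₁.Walk u v) (r : G₂.Walk x y)
    (hl : p.length = r.length), (tensorWalk p r hl).length = p.length
  | _, _, _, _, .nil, .nil, _ => rfl
  | _, _, _, _, .cons _ p, .cons _ r, _ => congrArg (· + 1) (tensorWalk_length p r _)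
  | _, _, _, _, .nil, .cons _ _, hl => by simp at hl
  | _, _, _, _, .cons _ _, .nil, hl => by simp at hl

theorem walkSign_tensorWalk (σ₁ : V₁ → V₁ → ℤ) (σ₂ : V₂ → V₂ → ℤ) :
    ∀ {u v : V₁} {x y : V₂} (p : G₁.Walk u v) (r : G₂.Walk x y) (hl : p.length = r.length),
    walkSign (tensorSign σ₁ σ₂) (tensorWalk p r hl) = walkSign σ₁ p * walkSign σ₂ r
  | _, _, _, _, .nil, .nil, _ => rfl
  | _, _, _, _, .cons _ p, .cons _ r, _ => by
    simp only [tensorWalk, walkSign, tensorSign, walkSign_tensorWalk σ₁ σ₂ p r]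
    ring
  | _, _, _, _, .nil, .cons _ _, hl => by simp at hl
  | _, _, _, _, .cons _ _, .nil, hl => by simp at hl

variable {u v : V₁} {x y : V₂}

theorem dist_tensorProd_eq_of_isShortest {p : G₁.Walk u v} (hp : IsShortest p)
    (r : G₂.Walk x y) (hl : p.length = r.length) :
    (tensorProd G₁ G₂).dist (u, x) (v, y) = G₁.dist u v := by
  apply le_antisymm
  · calc (tensorProd G₁ G₂).dist (u, x) (v, y) ≤ (tensorWalk p r hl).length := dist_le _
      _ = G₁.dist u v := by rw [tensorWalk_length, hp]
  · exact Reachable.dist_map_le tensorProdFst ⟨tensorWalk p r hl⟩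

theorem isShortest_tensorWalk {p : G₁.Walk u v} (hp : IsShortest p) (r : G₂.Walk x y)
    (hl : p.length = r.length) : IsShortest (tensorWalk p r hl) := by
  rw [IsShortest, tensorWalk_length, dist_tensorProd_eq_of_isShortest hp r hl, hp]

theorem dist_tensorProd_eq_and_not_pairCompatible {σ₁ : V₁ → V₁ → ℤ} {σ₂ : V₂ → V₂ → ℤ}
    (hincomp : ¬ PairCompatible G₁ σ₁ u v) (r : G₂.Walk x y) (hr : r.length = G₁.dist u v)
    (hσr : walkSign σ₂ r ≠ 0) :
    (tensorProd G₁ G₂).dist (u, x) (v, y) = G₁.dist u v ∧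
      ¬ PairCompatible (tensorProd G₁ G₂) (tensorSign σ₁ σ₂) (u, x) (v, y) := by
  obtain ⟨p, q, hp, hq, hpq⟩ : ∃ p q : G₁.Walk u v, IsShortest p ∧ IsShortest q ∧
      walkSign σ₁ p ≠ walkSign σ₁ q := by
    simpa [PairCompatible] using hincomp
  have hpr : p.length = r.length := hp.trans hr.symm
  have hqr : q.length = r.length := hq.trans hr.symm
  refine ⟨dist_tensorProd_eq_of_isShortest hp r hpr, fun hcomp => hpq ?_⟩
  have hsign := hcomp _ _ (isShortest_tensorWalk hp r hpr) (isShortest_tensorWalk hq r hqr)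
  rw [walkSign_tensorWalk, walkSign_tensorWalk] at hsign
  exact mul_right_cancel₀ hσr hsign

end TensorWalk

theorem tensorProd_incompatible_lift_general {V₁ V₂ : Type*}
    (G₁ : SimpleGraph V₁) (G₂ : SimpleGraph V₂)
    (σ₁ : V₁ → V₁ → ℤ) (σ₂ : V₂ → V₂ → ℤ)
    (hσ₂ : ∀ u v : V₂, G₂.Adj u v → σ₂ u v = 1 ∨ σ₂ u v = -1)
    (u₀ uk : V₁) (k : ℕ) (hk : G₁.dist u₀ uk = k)
    (hincomp : ¬ PairCompatible G₁ σ₁ u₀ uk)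
    (w w' : V₂) (hww' : G₂.Adj w w') :
    (Even k →
      (tensorProd G₁ G₂).dist (u₀, w) (uk, w) = k ∧
        ¬ PairCompatible (tensorProd G₁ G₂) (tensorSign σ₁ σ₂) (u₀, w) (uk, w)) ∧
    (Odd k →
      (tensorProd G₁ G₂).dist (u₀, w) (uk, w') = k ∧
        ¬ PairCompatible (tensorProd G₁ G₂) (tensorSign σ₁ σ₂) (u₀, w) (uk, w')) := by
  have hσ₂0 : ∀ u v, G₂.Adj u v → σ₂ u v ≠ 0 := fun u v h => by
    rcases hσ₂ u v h with h | h <;> simp [h]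
  subst hk
  refine ⟨fun ⟨m, hm⟩ => ?_, fun ⟨m, hm⟩ => ?_⟩
  · obtain ⟨r, hr⟩ := hww'.exists_walk_length_eq_two_mul m
    exact dist_tensorProd_eq_and_not_pairCompatible hincomp r (by omega) (walkSign_ne_zero hσ₂0 r)
  · obtain ⟨r, hr⟩ := hww'.symm.exists_walk_length_eq_two_mul m
    exact dist_tensorProd_eq_and_not_pairCompatible hincomp (.cons hww' r)
      (by rw [Walk.length_cons, hr, hm]) (walkSign_ne_zero hσ₂0 _)

/-- An incompatible pair `(u₀,u_k)` at distance `k` in `Σ₁` lifts, via any edge `ww'`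
of `Σ₂`, to an incompatible pair at distance `k` in the connected tensor product
`Σ₁ ⊗ Σ₂`: namely `((u₀,w),(u_k,w))` when `k` is even, and `((u₀,w),(u_k,w'))`
when `k` is odd. -/
theorem tensorProd_incompatible_lift {V₁ V₂ : Type*}
    (G₁ : SimpleGraph V₁) (G₂ : SimpleGraph V₂)
    (h₁ : G₁.Connected) (h₂ : G₂.Connected)
    (hconn : (tensorProd G₁ G₂).Connected)
    (σ₁ : V₁ → V₁ → ℤ) (σ₂ : V₂ → V₂ → ℤ)
    (hσ₁ : ∀ u v : V₁, G₁.Adj u v → σ₁ u v = 1 ∨ σ₁ u v = -1)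
    (hσ₂ : ∀ u v : V₂, G₂.Adj u v → σ₂ u v = 1 ∨ σ₂ u v = -1)
    (hsymm₁ : ∀ u v : V₁, σ₁ u v = σ₁ v u) (hsymm₂ : ∀ u v : V₂, σ₂ u v = σ₂ v u)
    (u₀ uk : V₁) (k : ℕ) (hk : G₁.dist u₀ uk = k)
    (hincomp : ¬ PairCompatible G₁ σ₁ u₀ uk)
    (w w' : V₂) (hww' : G₂.Adj w w') :
    (Even k →
      (tensorProd G₁ G₂).dist (u₀, w) (uk, w) = k ∧
        ¬ PairCompatible (tensorProd G₁ G₂) (tensorSign σ₁ σ₂) (u₀, w) (uk, w)) ∧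
    (Odd k →
      (tensorProd G₁ G₂).dist (u₀, w) (uk, w') = k ∧
        ¬ PairCompatible (tensorProd G₁ G₂) (tensorSign σ₁ σ₂) (u₀, w) (uk, w')) :=
  tensorProd_incompatible_lift_general G₁ G₂ σ₁ σ₂ hσ₂ u₀ uk k hk hincomp w w' hww'
end
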